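/- The disjoint union of two permutation graphs is a permutation graph. -/

import Mathlib

open scoped Classical

/-- Two open intervals `(a,b)`, `(c,d)` overlap: they intersect and neither
contains the other. -/
def Overlap (I J : ℝ × ℝ) : Prop :=
  (I.1 < J.1 ∧ J.1 < I.2 ∧ I.2 < J.2) ∨ (J.1 < I.1 ∧ I.1 < J.2 ∧ J.2 < I.2)

/-- An interval system: a finite set of open subintervals of `(0,1)` (encoded by
their endpoint pairs) such that no interval has `0` or `1` as an endpoint and no
two distinct intervals share an endpoint. -/
structure IsIntervalSystem (𝓘 : Finset (ℝ × ℝ)) : Prop where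
  mem_Ioo : ∀ I ∈ 𝓘, 0 < I.1 ∧ I.1 < I.2 ∧ I.2 < 1
  ends_distinct : ∀ I ∈ 𝓘, ∀ J ∈ 𝓘, I ≠ J →
    I.1 ≠ J.1 ∧ I.1 ≠ J.2 ∧ I.2 ≠ J.1 ∧ I.2 ≠ J.2

/-- The overlap graph of an interval system. -/
def overlapGraph (𝓘 : Finset (ℝ × ℝ)) : SimpleGraph {I // I ∈ 𝓘} where
  Adj I J := Overlap I.1 J.1
  symm := ⟨by intro I J h; try dsimp only at *
              unfold Overlap at *; tauto⟩
  loopless := ⟨by intro I h; rcases h with ⟨h1, _, _⟩ | ⟨h1, _, _⟩ <;> linarith⟩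

/-- A pillar of an interval system: a point of `(0,1)` that is not an endpoint
of any interval. -/
def IsPillar (𝓘 : Finset (ℝ × ℝ)) (p : ℝ) : Prop :=
  0 < p ∧ p < 1 ∧ ∀ I ∈ 𝓘, p ≠ I.1 ∧ p ≠ I.2

/-- A circle graph: a graph isomorphic to the overlap graph of an interval
system. -/
def IsCircleGraph {V : Type*} (G : SimpleGraph V) : Prop :=
  ∃ 𝓘 : Finset (ℝ × ℝ), IsIntervalSystem 𝓘 ∧ Nonempty (G ≃g overlapGraph 𝓘)

/-- A permutation graph: a graph isomorphic to the overlap graph of an interval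
system admitting a pillar contained in every interval. -/
def IsPermutationGraph {V : Type*} (G : SimpleGraph V) : Prop :=
  ∃ 𝓘 : Finset (ℝ × ℝ), IsIntervalSystem 𝓘 ∧
    (∃ p, IsPillar 𝓘 p ∧ ∀ I ∈ 𝓘, I.1 < p ∧ p < I.2) ∧
    Nonempty (G ≃g overlapGraph 𝓘)

/-- `I` is assigned to pillar `p` with respect to the pillar set `P` and the
total order on `P` given by the ranking function `r` (injective on `P`): `p` is
the `r`-least pillar of `P` contained in `I`. -/
def AssignedTo (P : Finset ℝ) (r : ℝ → ℕ) (I : ℝ × ℝ) (p : ℝ) : Prop :=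
  p ∈ P ∧ I.1 < p ∧ p < I.2 ∧
    ∀ q ∈ P, I.1 < q → q < I.2 → q ≠ p → r p < r q

/-- A pillar assignment `(P, ≺, c)`: a finite set of pillars `P`, a total order
on `P` (encoded by a ranking `r` injective on `P`), and a colouring `c` such
that overlapping intervals assigned to pillars of the same colour are assigned
to the same pillar. -/
structure IsPillarAssignment (𝓘 : Finset (ℝ × ℝ)) (P : Finset ℝ) (r : ℝ → ℕ)
    (c : ℝ → ℕ) : Prop where
  pillar : ∀ p ∈ P, IsPillar 𝓘 p
  inj : Set.InjOn r ↑P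
  colour : ∀ I₁ ∈ 𝓘, ∀ I₂ ∈ 𝓘, Overlap I₁ I₂ → ∀ p₁ p₂,
    AssignedTo P r I₁ p₁ → AssignedTo P r I₂ p₂ → c p₁ = c p₂ → p₁ = p₂

/-- A pillar assignment is complete if every interval contains a pillar of `P`. -/
def IsCompleteAssignment (𝓘 : Finset (ℝ × ℝ)) (P : Finset ℝ) : Prop :=
  ∀ I ∈ 𝓘, ∃ p ∈ P, I.1 < p ∧ p < I.2

/-- `(s,t)` is a segment of the finite set `Q ⊆ (0,1)`: a maximal open
subinterval of `(0,1) \ Q`. -/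
def IsSegment (Q : Finset ℝ) (s t : ℝ) : Prop :=
  (s ∈ Q ∨ s = 0) ∧ (t ∈ Q ∨ t = 1) ∧ s < t ∧ ∀ q ∈ Q, q ≤ s ∨ t ≤ q

/-- The `P`-degree of `(p₁,p₂)`: the number of pairs of segments `(S₁, S₂)`
with `S₁` a segment of `P` disjoint from `(p₁,p₂)`, `S₂` a segment of
`P ∪ {p₁,p₂}` contained in `(p₁,p₂)`, such that some interval of `𝓘` has one
endpoint in `S₁` and one endpoint in `S₂`. -/
noncomputable def PDeg (𝓘 : Finset (ℝ × ℝ)) (P : Finset ℝ) (p₁ p₂ : ℝ) : ℕ :=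
  Set.ncard {x : (ℝ × ℝ) × (ℝ × ℝ) |
    IsSegment P x.1.1 x.1.2 ∧ (x.1.2 ≤ p₁ ∨ p₂ ≤ x.1.1) ∧
    IsSegment (P ∪ {p₁, p₂}) x.2.1 x.2.2 ∧ p₁ ≤ x.2.1 ∧ x.2.2 ≤ p₂ ∧
    ∃ I ∈ 𝓘,
      (x.1.1 < I.1 ∧ I.1 < x.1.2 ∧ x.2.1 < I.2 ∧ I.2 < x.2.2) ∨
      (x.2.1 < I.1 ∧ I.1 < x.2.2 ∧ x.1.1 < I.2 ∧ I.2 < x.1.2)}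

/-- The `(P,≺)`-degree of an open interval `(a,b)` contained in a segment of
`P`: the number of pillars `p ∈ P` such that some interval of `𝓘` with an
endpoint in `(a,b)` is assigned to `p`. -/
noncomputable def PrecDeg (𝓘 : Finset (ℝ × ℝ)) (P : Finset ℝ) (r : ℝ → ℕ)
    (a b : ℝ) : ℕ :=
  Set.ncard {p : ℝ | ∃ I ∈ 𝓘,
    ((a < I.1 ∧ I.1 < b) ∨ (a < I.2 ∧ I.2 < b)) ∧ AssignedTo P r I p}

/-- The maximum degree of `(P,≺)` is at most `D`: every segment of `P` has
`(P,≺)`-degree at most `D`. -/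
def MaxDegLE (𝓘 : Finset (ℝ × ℝ)) (P : Finset ℝ) (r : ℝ → ℕ) (D : ℕ) : Prop :=
  ∀ s t : ℝ, IsSegment P s t → PrecDeg 𝓘 P r s t ≤ D

/-- A graph is perfect if every induced subgraph has chromatic number equal to
its clique number. -/
def IsPerfect {V : Type*} (G : SimpleGraph V) : Prop :=
  ∀ s : Set V, (G.induce s).chromaticNumber = ((G.induce s).cliqueNum : ℕ∞)

/-- The disjoint union of two permutation graphs is a permutation graph. -/
theorem isPermutationGraph_sum {V W : Type*} (G : SimpleGraph V)
    (H : SimpleGraph W) (hG : IsPermutationGraph G) (hH : IsPermutationGraph H) :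
    IsPermutationGraph (G ⊕g H) := by
  obtain ⟨𝓘, hI, ⟨p, hp, hpI⟩, ⟨e⟩⟩ := hG
  obtain ⟨𝓙, hJ, ⟨q, hq, hqJ⟩, ⟨f⟩⟩ := hH
  set S : Finset ℝ := insert p (insert (1-p) (𝓘.image fun I => min (p - I.1) (I.2 - p)))
    with hS
  have hSne : S.Nonempty := ⟨p, by simp [hS]⟩
  set ε : ℝ := S.min' hSne / 2 with hε
  have hmin_pos : 0 < S.min' hSne := by
    rcases Finset.mem_insert.1 (S.min'_mem hSne) with h | h
    · rw [h]; exact hp.1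
    rcases Finset.mem_insert.1 h with h | h
    · rw [h]; linarith [hp.2.1]
    · obtain ⟨I, hIm, hIe⟩ := Finset.mem_image.1 h
      rw [← hIe]
      exact lt_min (by linarith [(hpI I hIm).1]) (by linarith [(hpI I hIm).2])
  have hε0 : 0 < ε := by rw [hε]; linarith
  have hεp : 2 * ε ≤ p := by
    have := S.min'_le p (Finset.mem_insert_self _ _)
    rw [hε]; linarith
  have hεp' : 2 * ε ≤ 1 - p := by
    have := S.min'_le (1-p)
      (Finset.mem_insert_of_mem (Finset.mem_insert_self _ _))
    rw [hε]; linarith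
  have hIout : ∀ I ∈ 𝓘, I.1 ≤ p - 2*ε ∧ p + 2*ε ≤ I.2 := by
    intro I hIm
    have hm := S.min'_le (min (p - I.1) (I.2 - p))
      (Finset.mem_insert_of_mem (Finset.mem_insert_of_mem
        (Finset.mem_image_of_mem _ hIm)))
    have h1 := min_le_left (p - I.1) (I.2 - p)
    have h2 := min_le_right (p - I.1) (I.2 - p)
    rw [hε] at *
    constructor <;> linarith
  set φ : ℝ → ℝ := fun x => p - ε + 2*ε*x with hφ
  have hφlt : ∀ a b : ℝ, φ a < φ b ↔ a < b := by
    intro a b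
    simp only [hφ]
    constructor <;> intro h <;> nlinarith
  have hφinj : Function.Injective φ := by
    intro a b h
    by_contra hne
    rcases lt_or_gt_of_ne hne with h' | h'
    · exact absurd h ((hφlt a b).2 h').ne
    · exact absurd h.symm ((hφlt b a).2 h').ne
  set Φ : ℝ × ℝ → ℝ × ℝ := fun J => (φ J.1, φ J.2) with hΦ
  have hΦ1 : ∀ J : ℝ × ℝ, (Φ J).1 = φ J.1 := fun J => rfl
  have hΦ2 : ∀ J : ℝ × ℝ, (Φ J).2 = φ J.2 := fun J => rfl
  have hΦinj : Function.Injective Φ := by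
    intro a b h
    have h1 := congrArg Prod.fst h
    have h2 := congrArg Prod.snd h
    rw [hΦ1, hΦ1] at h1; rw [hΦ2, hΦ2] at h2
    exact Prod.ext (hφinj h1) (hφinj h2)
  have hφrange : ∀ x : ℝ, 0 < x → x < 1 → p - ε < φ x ∧ φ x < p + ε := by
    intro x hx0 hx1
    simp only [hφ]
    constructor <;> nlinarith
  set 𝓙' : Finset (ℝ × ℝ) := 𝓙.image Φ with hJ'
  set 𝓚 : Finset (ℝ × ℝ) := 𝓘 ∪ 𝓙' with hK
  have hJ'in : ∀ J ∈ 𝓙, (p - ε < φ J.1 ∧ φ J.1 < p + ε) ∧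
      (p - ε < φ J.2 ∧ φ J.2 < p + ε) := by
    intro J hJm
    obtain ⟨h0, h12, h1⟩ := hJ.mem_Ioo J hJm
    exact ⟨hφrange _ h0 (by linarith), hφrange _ (by linarith) h1⟩
  have hKsys : IsIntervalSystem 𝓚 := by
    constructor
    · intro K hKm
      rcases Finset.mem_union.1 hKm with h | h
      · exact hI.mem_Ioo K h
      · obtain ⟨J, hJm, rfl⟩ := Finset.mem_image.1 h
        obtain ⟨⟨ha, hb⟩, ⟨hc, hd⟩⟩ := hJ'in J hJm
        obtain ⟨h0, h12, h1⟩ := hJ.mem_Ioo J hJm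
        rw [hΦ1, hΦ2]
        exact ⟨by linarith, (hφlt _ _).2 h12, by linarith⟩
    · intro K₁ hK₁ K₂ hK₂ hne
      rcases Finset.mem_union.1 hK₁ with h1 | h1 <;>
        rcases Finset.mem_union.1 hK₂ with h2 | h2
      · exact hI.ends_distinct K₁ h1 K₂ h2 hne
      · obtain ⟨J, hJm, rfl⟩ := Finset.mem_image.1 h2
        obtain ⟨⟨ha, hb⟩, ⟨hc, hd⟩⟩ := hJ'in J hJm
        obtain ⟨hlo, hhi⟩ := hIout K₁ h1
        refine ⟨?_, ?_, ?_, ?_⟩ <;> simp only [hΦ1, hΦ2] <;> intro h <;> linarith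
      · obtain ⟨J, hJm, rfl⟩ := Finset.mem_image.1 h1
        obtain ⟨⟨ha, hb⟩, ⟨hc, hd⟩⟩ := hJ'in J hJm
        obtain ⟨hlo, hhi⟩ := hIout K₂ h2
        refine ⟨?_, ?_, ?_, ?_⟩ <;> simp only [hΦ1, hΦ2] <;> intro h <;> linarith
      · obtain ⟨J₁, hJ₁m, rfl⟩ := Finset.mem_image.1 h1
        obtain ⟨J₂, hJ₂m, rfl⟩ := Finset.mem_image.1 h2
        have hJne : J₁ ≠ J₂ := fun h => hne (by rw [h])
        obtain ⟨d1, d2, d3, d4⟩ := hJ.ends_distinct J₁ hJ₁m J₂ hJ₂m hJne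
        refine ⟨?_, ?_, ?_, ?_⟩ <;> simp only [hΦ1, hΦ2]
        exacts [fun h => d1 (hφinj h), fun h => d2 (hφinj h),
          fun h => d3 (hφinj h), fun h => d4 (hφinj h)]
  have hp'range : p - ε < φ q ∧ φ q < p + ε := hφrange q hq.1 hq.2.1
  have hIcont : ∀ I ∈ 𝓘, ∀ J ∈ 𝓙, I.1 < φ J.1 ∧ φ J.2 < I.2 := by
    intro I hIm J hJm
    obtain ⟨⟨ha, hb⟩, ⟨hc, hd⟩⟩ := hJ'in J hJm
    obtain ⟨hlo, hhi⟩ := hIout I hIm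
    exact ⟨by linarith, by linarith⟩
  have hΦovl : ∀ J K : ℝ × ℝ, Overlap (Φ J) (Φ K) ↔ Overlap J K := by
    intro J K
    simp only [Overlap, hΦ1, hΦ2, hφlt]
  refine ⟨𝓚, hKsys, ⟨φ q, ⟨?_, ?_, ?_⟩, ?_⟩, ⟨?_⟩⟩
  · linarith [hp'range.1]
  · linarith [hp'range.2]
  · intro K hKm
    rcases Finset.mem_union.1 hKm with h | h
    · obtain ⟨hlo, hhi⟩ := hIout K h
      exact ⟨by intro he; rw [he] at hp'range; linarith [hp'range.1],
        by intro he; rw [he] at hp'range; linarith [hp'range.2]⟩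
    · obtain ⟨J, hJm, rfl⟩ := Finset.mem_image.1 h
      obtain ⟨n1, n2⟩ := hq.2.2 J hJm
      rw [hΦ1, hΦ2]
      exact ⟨fun h => n1 (hφinj h), fun h => n2 (hφinj h)⟩
  · intro K hKm
    rcases Finset.mem_union.1 hKm with h | h
    · obtain ⟨hlo, hhi⟩ := hIout K h
      exact ⟨by linarith [hp'range.1], by linarith [hp'range.2]⟩
    · obtain ⟨J, hJm, rfl⟩ := Finset.mem_image.1 h
      rw [hΦ1, hΦ2]
      exact ⟨(hφlt _ _).2 (hqJ J hJm).1, (hφlt _ _).2 (hqJ J hJm).2⟩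
  · -- the isomorphism
    set t : V ⊕ W → {K // K ∈ 𝓚} :=
      Sum.elim (fun v => ⟨(e v).1, Finset.mem_union_left _ (e v).2⟩)
        (fun w => ⟨Φ (f w).1,
          Finset.mem_union_right _ (Finset.mem_image_of_mem Φ (f w).2)⟩)
      with ht
    have hcross : ∀ I ∈ 𝓘, ∀ J ∈ 𝓙, I ≠ Φ J := by
      intro I hIm J hJm h
      have h1 := (hIcont I hIm J hJm).1
      rw [h, hΦ1] at h1
      exact lt_irrefl _ h1
    have hnov : ∀ I ∈ 𝓘, ∀ J ∈ 𝓙, ¬ Overlap I (Φ J) ∧ ¬ Overlap (Φ J) I := by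
      intro I hIm J hJm
      obtain ⟨hc1, hc2⟩ := hIcont I hIm J hJm
      have hJlt := (hφlt J.1 J.2).2 (hJ.mem_Ioo J hJm).2.1
      constructor <;> rintro (⟨o1, o2, o3⟩ | ⟨o1, o2, o3⟩) <;>
        rw [hΦ1, hΦ2] at * <;> linarith
    have htbij : Function.Bijective t := by
      constructor
      · intro a b hab
        rcases a with v₁ | w₁ <;> rcases b with v₂ | w₂
        · have h0 := congrArg Subtype.val hab
          have h : (e v₁ : ℝ × ℝ) = (e v₂ : ℝ × ℝ) := h0
          exact congrArg Sum.inl (e.injective (Subtype.ext h))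
        · have h0 := congrArg Subtype.val hab
          have h : (e v₁ : ℝ × ℝ) = Φ (f w₂).1 := h0
          exact absurd h (hcross _ (e v₁).2 _ (f w₂).2)
        · have h0 := congrArg Subtype.val hab
          have h : Φ (f w₁).1 = (e v₂ : ℝ × ℝ) := h0
          exact absurd h.symm (hcross _ (e v₂).2 _ (f w₁).2)
        · have h0 := congrArg Subtype.val hab
          have h : Φ (f w₁).1 = Φ (f w₂).1 := h0
          exact congrArg Sum.inr (f.injective (Subtype.ext (hΦinj h)))
      · rintro ⟨K, hKm⟩
        rcases Finset.mem_union.1 hKm with h | h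
        · obtain ⟨v, hv⟩ := e.surjective ⟨K, h⟩
          refine ⟨Sum.inl v, Subtype.ext ?_⟩
          show (e v : ℝ × ℝ) = K
          exact congrArg Subtype.val hv
        · obtain ⟨J, hJm, rfl⟩ := Finset.mem_image.1 h
          obtain ⟨w, hw⟩ := f.surjective ⟨J, hJm⟩
          refine ⟨Sum.inr w, Subtype.ext ?_⟩
          show Φ (f w).1 = Φ J
          rw [hw]
    refine ⟨Equiv.ofBijective t htbij, ?_⟩
    intro a b
    show (overlapGraph 𝓚).Adj (t a) (t b) ↔ (G ⊕g H).Adj a b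
    rcases a with v₁ | w₁ <;> rcases b with v₂ | w₂
    · exact e.map_rel_iff
    · exact iff_of_false ((hnov _ (e v₁).2 _ (f w₂).2).1) (by simp)
    · exact iff_of_false ((hnov _ (e v₂).2 _ (f w₁).2).2) (by simp)
    · exact (hΦovl (f w₁).1 (f w₂).1).trans f.map_rel_iff
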